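/- For any real γ > -1, ∫₀¹ dν / ((1+γν)³ √(ν(1-ν))) = π(8 + 8γ + 3γ²) / (8(1+γ)^{5/2}). -/

import Mathlib

/-!
Put `a = √(1 + γ)`. The function `arcsin √ν + arctan ((a - 1) √(ν(1-ν)) / (1 - ν + aν))` is a
primitive of `a / (2 (1 + γν) √(ν(1-ν)))` that is continuous on `[0, 1]` and rises from `0` to
`π / 2`; hence `∫₀¹ dν / ((1 + γν) √(ν(1-ν))) = π / a`. Differentiating
`√(ν(1-ν)) (p + qν) / (1 + γν)²` for suitable `p`, `q` reduces the cube to the first power, with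
factor `(8 + 8γ + 3γ²) / (8 (1 + γ)²)`. Since the integrand is positive, it is automatically
integrable as the derivative of a continuous function, and the fundamental theorem of calculus
applies.
-/

open Real Set

lemma one_add_mul_pos {γ x : ℝ} (hγ : -1 < γ) (hx0 : 0 ≤ x) (hx1 : x ≤ 1) : 0 < 1 + γ * x := by
  rcases le_total 0 γ with h | h <;> nlinarith

lemma hasDerivAt_sqrt_mul_one_sub {x : ℝ} (hx0 : 0 < x) (hx1 : x < 1) :
    HasDerivAt (fun ν ↦ √(ν * (1 - ν))) ((1 - 2 * x) / (2 * √(x * (1 - x)))) x := by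
  refine (((hasDerivAt_id' x).mul ((hasDerivAt_id' x).const_sub 1)).sqrt
    (mul_pos hx0 (sub_pos.2 hx1)).ne').congr_deriv ?_
  simp only [Pi.mul_apply]
  ring

/-- On `[0, 1)` this is `arctan (a √(ν / (1 - ν)))` by the addition formula for `arctan`; unlike
that form it is continuous at `ν = 1`. -/
noncomputable def arcsinArctanPrimitive (a ν : ℝ) : ℝ :=
  arcsin √ν + arctan ((a - 1) * √(ν * (1 - ν)) / (1 - ν + a * ν))

lemma hasDerivAt_arcsinArctanPrimitive {a x : ℝ} (ha : 0 ≤ a) (hx0 : 0 < x) (hx1 : x < 1) :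
    HasDerivAt (arcsinArctanPrimitive a) (a / (2 * (1 - x + a ^ 2 * x) * √(x * (1 - x)))) x := by
  have hD : 0 < 1 - x + a * x := by nlinarith
  have hu := ((hasDerivAt_sqrt_mul_one_sub hx0 hx1).const_mul (a - 1)).fun_div
    (((hasDerivAt_id' x).const_sub 1).add ((hasDerivAt_id' x).const_mul a)) hD.ne'
  have hs : √x < 1 := by simpa using sqrt_lt_sqrt hx0.le hx1
  refine (((hasDerivAt_arcsin (by linarith [sqrt_nonneg x]) hs.ne).comp x
    (hasDerivAt_sqrt hx0.ne')).add hu.arctan).congr_deriv ?_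
  obtain ⟨s, hs0, rfl⟩ : ∃ s, 0 < s ∧ x = s ^ 2 := ⟨√x, sqrt_pos.2 hx0, (sq_sqrt hx0.le).symm⟩
  obtain ⟨t, ht0, ht⟩ : ∃ t, 0 < t ∧ 1 - s ^ 2 = t ^ 2 :=
    ⟨√(1 - s ^ 2), sqrt_pos.2 (by linarith), (sq_sqrt (by linarith)).symm⟩
  rw [ht] at hD ⊢
  simp only [Pi.add_apply, ht, ← mul_pow, sqrt_sq hs0.le, sqrt_sq ht0.le,
    sqrt_sq (mul_pos hs0 ht0).le]
  field_simp
  rw [← ht]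
  ring

lemma continuousOn_arcsinArctanPrimitive {a : ℝ} (ha : 0 < a) :
    ContinuousOn (arcsinArctanPrimitive a) (Icc 0 1) := by
  refine (continuous_arcsin.comp continuous_sqrt).continuousOn.add
    (continuous_arctan.comp_continuousOn (ContinuousOn.div (by fun_prop) (by fun_prop) ?_))
  rintro ν ⟨hν0, hν1⟩
  nlinarith [mul_nonneg ha.le hν0]

lemma arcsinArctanPrimitive_zero (a : ℝ) : arcsinArctanPrimitive a 0 = 0 := by
  simp [arcsinArctanPrimitive]

lemma arcsinArctanPrimitive_one (a : ℝ) : arcsinArctanPrimitive a 1 = π / 2 := by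
  simp [arcsinArctanPrimitive]

noncomputable def cubeReductionTerm (γ ν : ℝ) : ℝ :=
  √(ν * (1 - ν)) * (γ * (5 * γ + 8) + 3 * γ ^ 2 * (γ + 2) * ν) / (4 * (1 + γ) ^ 2 * (1 + γ * ν) ^ 2)

lemma hasDerivAt_cubeReductionTerm {γ x : ℝ} (hγ : 1 + γ ≠ 0) (hγx : 1 + γ * x ≠ 0)
    (hx0 : 0 < x) (hx1 : x < 1) :
    HasDerivAt (cubeReductionTerm γ) (1 / ((1 + γ * x) ^ 3 * √(x * (1 - x)))
      - (8 + 8 * γ + 3 * γ ^ 2) / (8 * (1 + γ) ^ 2) / ((1 + γ * x) * √(x * (1 - x)))) x := by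
  have hden : 4 * (1 + γ) ^ 2 * (1 + γ * x) ^ 2 ≠ 0 := by positivity
  refine (((hasDerivAt_sqrt_mul_one_sub hx0 hx1).fun_mul
    (((hasDerivAt_id' x).const_mul _).const_add _)).fun_div
    ((((hasDerivAt_id' x).const_mul γ).const_add 1).fun_pow 2 |>.const_mul _) hden).congr_deriv ?_
  obtain ⟨s, hs0, rfl⟩ : ∃ s, 0 < s ∧ x = s ^ 2 := ⟨√x, sqrt_pos.2 hx0, (sq_sqrt hx0.le).symm⟩
  obtain ⟨t, ht0, ht⟩ : ∃ t, 0 < t ∧ 1 - s ^ 2 = t ^ 2 :=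
    ⟨√(1 - s ^ 2), sqrt_pos.2 (by linarith), (sq_sqrt (by linarith)).symm⟩
  simp only [ht, ← mul_pow, sqrt_sq (mul_pos hs0 ht0).le, Nat.cast_ofNat, Nat.reduceSub, pow_one]
  field_simp
  rw [← ht]
  ring

lemma cubeReductionTerm_zero (γ : ℝ) : cubeReductionTerm γ 0 = 0 := by
  simp [cubeReductionTerm]

lemma cubeReductionTerm_one (γ : ℝ) : cubeReductionTerm γ 1 = 0 := by
  simp [cubeReductionTerm]

lemma continuousOn_cubeReductionTerm {γ : ℝ} (hγ : -1 < γ) :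
    ContinuousOn (cubeReductionTerm γ) (Icc 0 1) := by
  refine ContinuousOn.div (by fun_prop) (by fun_prop) ?_
  rintro ν ⟨hν0, hν1⟩
  have := one_add_mul_pos hγ hν0 hν1
  have : 0 < 1 + γ := by linarith
  positivity

noncomputable def cubePrimitive (γ ν : ℝ) : ℝ :=
  (8 + 8 * γ + 3 * γ ^ 2) / (4 * (1 + γ) ^ 2 * √(1 + γ)) * arcsinArctanPrimitive √(1 + γ) ν
    + cubeReductionTerm γ ν

lemma hasDerivAt_cubePrimitive {γ x : ℝ} (hγ : -1 < γ) (hx0 : 0 < x) (hx1 : x < 1) :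
    HasDerivAt (cubePrimitive γ) (1 / ((1 + γ * x) ^ 3 * √(x * (1 - x)))) x := by
  have h1γ : 0 < 1 + γ := by linarith
  have hγx := one_add_mul_pos hγ hx0.le hx1.le
  refine (((hasDerivAt_arcsinArctanPrimitive (sqrt_nonneg _) hx0 hx1).const_mul _).add
    (hasDerivAt_cubeReductionTerm h1γ.ne' hγx.ne' hx0 hx1)).congr_deriv ?_
  rw [sq_sqrt h1γ.le, show 1 - x + (1 + γ) * x = 1 + γ * x by ring]
  have := sqrt_pos.2 h1γ
  have := sqrt_pos.2 (mul_pos hx0 (sub_pos.2 hx1))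
  field_simp
  ring

lemma continuousOn_cubePrimitive {γ : ℝ} (hγ : -1 < γ) :
    ContinuousOn (cubePrimitive γ) (Icc 0 1) :=
  (continuousOn_const.mul (continuousOn_arcsinArctanPrimitive (sqrt_pos.2 (by linarith)))).add
    (continuousOn_cubeReductionTerm hγ)

theorem integral_cube (γ : ℝ) (hγ : γ > -1) :
    ∫ ν in (0:ℝ)..1, 1 / ((1 + γ * ν) ^ 3 * Real.sqrt (ν * (1 - ν)))
      = π * (8 + 8 * γ + 3 * γ ^ 2) / (8 * (1 + γ) ^ ((5:ℝ)/2)) := by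
  have hderiv : ∀ x ∈ Ioo (0:ℝ) 1,
      HasDerivAt (cubePrimitive γ) (1 / ((1 + γ * x) ^ 3 * √(x * (1 - x)))) x :=
    fun x hx ↦ hasDerivAt_cubePrimitive hγ hx.1 hx.2
  have hpos : ∀ x ∈ Ioo (0:ℝ) 1, 0 ≤ 1 / ((1 + γ * x) ^ 3 * √(x * (1 - x))) := by
    rintro x ⟨hx0, hx1⟩
    have := one_add_mul_pos hγ hx0.le hx1.le
    positivity
  have hcont := continuousOn_cubePrimitive hγ
  rw [intervalIntegral.integral_eq_sub_of_hasDerivAt_of_le zero_le_one hcont hderiv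
    (intervalIntegral.intervalIntegrable_deriv_of_nonneg (by rwa [uIcc_of_le zero_le_one])
      (by rwa [min_eq_left zero_le_one, max_eq_right zero_le_one])
      (by rwa [min_eq_left zero_le_one, max_eq_right zero_le_one]))]
  have h1γ : 0 < 1 + γ := by linarith
  have hpow : (1 + γ) ^ ((5:ℝ) / 2) = √(1 + γ) ^ 5 := by
    rw [rpow_div_two_eq_sqrt _ h1γ.le]
    norm_cast
  simp only [cubePrimitive, arcsinArctanPrimitive_one, arcsinArctanPrimitive_zero,
    cubeReductionTerm_one, cubeReductionTerm_zero, hpow]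
  have ha := sqrt_pos.2 h1γ
  have ha2 := sq_sqrt h1γ.le
  generalize √(1 + γ) = a at ha ha2 ⊢
  rw [← ha2]
  field_simp
  ring
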